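/- On any preference domain satisfying Top-two Richness, a mechanism is locally unanimous and strategy-proof if and only if it equals the TTC mechanism. -/
import Mathlib


/- Housing market model (Shapley–Scarf). Agents and objects are identified:
the type `I` is the (finite) set of agents, and object `i` (the endowment of
agent `i`) is identified with `i` itself. A strict preference is a linear
order on `I` (viewed as the set of objects); a preference domain is a set of
linear orders; a mechanism maps preference profiles to assignments `I → I`
(an allocation being a bijective assignment). -/

open Finset

variable {I : Type*} [DecidableEq I]

/-- The most preferred object of `S` under the linear order `p`
(`d` is a junk default, used only when `S = ∅`). -/
def favIn (p : LinearOrder I) (S : Finset I) (d : I) : I :=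
  if h : S.Nonempty then @Finset.max' I p S h else d

/-- The top choice of preference `p` (`d` is a junk default, used only if `I` is empty). -/
def topOf [Fintype I] (p : LinearOrder I) (d : I) : I := favIn p Finset.univ d

/-- The agents of `S` lying on a cycle of the pointing map `fun i => fav i S`
(each agent points to the owner of his favorite remaining object; a cycle
closes within at most `S.card` steps). -/
def cyclicAgents (fav : I → Finset I → I) (S : Finset I) : Finset I :=
  S.filter fun i => ∃ k ∈ Finset.range S.card, (fun j => fav j S)^[k + 1] i = i

lemma cyclicAgents_subset (fav : I → Finset I → I) (S : Finset I) :
    cyclicAgents fav S ⊆ S := Finset.filter_subset _ _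

/-- The TTC procedure on the set `S` of remaining agents: every agent of `S`
lying on a pointing cycle receives the object owned by the agent he points to
and is removed; the procedure is then repeated on the remaining agents.
(Agents outside `S` keep their endowments; when the pointing map sends `S`
into `S` — as is always the case for pointing maps induced by preferences —
there always is a cycle, so the degenerate `else` branch is never reached.) -/
def TTCaux (fav : I → Finset I → I) (S : Finset I) : I → I :=
  if hC : (cyclicAgents fav S).Nonempty then fun i =>
    if i ∈ cyclicAgents fav S then fav i S else TTCaux fav (S \ cyclicAgents fav S) i
  else id
termination_by S.card
decreasing_by
  exact Finset.card_lt_card (Finset.sdiff_ssubset (cyclicAgents_subset fav S) hC)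

/-- The Top Trading Cycles mechanism. -/
def TTC [Fintype I] (P : I → LinearOrder I) : I → I :=
  TTCaux (fun i S => favIn (P i) S i) Finset.univ

section Axioms

variable [Fintype I]

/-- `ψ` is locally unanimous on the domain `D`: whenever some nonempty set `J`
of agents admits a unanimously best suballocation `μ` (a bijection of `J` onto
its endowment set `O_J = J` giving every member his top choice), `ψ` implements `μ` on `J`. -/
def LocallyUnanimous (D : Set (LinearOrder I)) (ψ : (I → LinearOrder I) → I → I) : Prop :=
  ∀ P : I → LinearOrder I, (∀ i, P i ∈ D) →
    ∀ J : Finset I, J.Nonempty → ∀ μ : I → I, Set.BijOn μ ↑J ↑J →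
      (∀ i ∈ J, μ i = topOf (P i) i) → ∀ i ∈ J, ψ P i = μ i

/-- Strategy-proofness of `ψ` on the domain `D`. -/
def StrategyProof (D : Set (LinearOrder I)) (ψ : (I → LinearOrder I) → I → I) : Prop :=
  ∀ P : I → LinearOrder I, (∀ i, P i ∈ D) → ∀ i : I, ∀ q ∈ D,
    ¬ (P i).lt (ψ P i) (ψ (Function.update P i q) i)

/-- Group strategy-proofness of `ψ` on the domain `D`. -/
def GroupStrategyProof (D : Set (LinearOrder I)) (ψ : (I → LinearOrder I) → I → I) : Prop :=
  ∀ P P' : I → LinearOrder I, (∀ i, P i ∈ D) → (∀ i, P' i ∈ D) →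
    ∀ J : Finset I, J.Nonempty → (∀ i ∉ J, P' i = P i) →
    ¬ ((∀ i ∈ J, (P i).le (ψ P i) (ψ P' i)) ∧ ∃ j ∈ J, (P j).lt (ψ P j) (ψ P' j))

/-- Individual rationality of `ψ` on the domain `D` (agent `i`'s endowment is `i`). -/
def IndividuallyRational (D : Set (LinearOrder I)) (ψ : (I → LinearOrder I) → I → I) : Prop :=
  ∀ P : I → LinearOrder I, (∀ i, P i ∈ D) → ∀ i : I, (P i).le i (ψ P i)

/-- Top-one Richness of the domain `D`. -/
def TopOneRich (D : Set (LinearOrder I)) : Prop :=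
  ∀ o : I, ∃ p ∈ D, topOf p o = o

/-- Top-two Richness of the domain `D`: any two distinct objects can be
reported as the top two choices, in either order. -/
def TopTwoRich (D : Set (LinearOrder I)) : Prop :=
  ∀ o o' : I, o ≠ o' → ∃ p ∈ D, topOf p o = o ∧ ∀ x : I, x ≠ o → p.le x o'

/-- `J` forms a cycle of the pointing map `f`: `J` is nonempty, closed under
`f`, and every member is reachable from every member by iterating `f`. -/
def IsCycleIn (f : I → I) (J : Finset I) : Prop :=
  J.Nonempty ∧ (∀ i ∈ J, f i ∈ J) ∧ ∀ i ∈ J, ∀ j ∈ J, ∃ k : ℕ, f^[k] i = j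

end Axioms


set_option linter.unusedSectionVars false
set_option linter.unusedVariables false
set_option maxHeartbeats 1000000

open Function

lemma favIn_mem (p : LinearOrder I) {S : Finset I} (h : S.Nonempty) (d : I) : favIn p S d ∈ S := by
  rw [favIn, dif_pos h]; exact @Finset.max'_mem I p S h


lemma lo_le_of_not_lt (l : LinearOrder I) {a b : I} (h : ¬ l.lt a b) : l.le b a := by
  letI := l; exact not_lt.mp h

lemma lo_not_lt_of_le (l : LinearOrder I) {a b : I} (h : l.le a b) : ¬ l.lt b a := by
  letI := l; exact not_lt.mpr h

lemma lo_antisymm (l : LinearOrder I) {a b : I} (h : l.le a b) (h' : l.le b a) : a = b := by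
  letI := l; exact le_antisymm h h'

lemma le_favIn (p : LinearOrder I) {S : Finset I} {a : I} (ha : a ∈ S) (d : I) :
    p.le a (favIn p S d) := by
  rw [favIn, dif_pos ⟨a, ha⟩]; exact @Finset.le_max' I p S a ha

lemma favIn_eq_of_mem (p : LinearOrder I) {S T : Finset I} {d : I} (hTS : T ⊆ S)
    (h : favIn p S d ∈ T) : favIn p T d = favIn p S d :=
  lo_antisymm p (le_favIn p (hTS (favIn_mem p ⟨_, h⟩ d)) d) (le_favIn p h d)

lemma le_topOf [Fintype I] (p : LinearOrder I) (a d : I) : p.le a (topOf p d) :=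
  le_favIn p (Finset.mem_univ a) d

lemma topOf_indep [Fintype I] (p : LinearOrder I) (a d d' : I) : topOf p d = topOf p d' := by
  have h : (Finset.univ : Finset I).Nonempty := ⟨a, Finset.mem_univ a⟩
  rw [topOf, topOf, favIn, favIn, dif_pos h, dif_pos h]

lemma favIn_eq_topOf [Fintype I] (p : LinearOrder I) {T : Finset I} {d : I}
    (h : topOf p d ∈ T) : favIn p T d = topOf p d :=
  favIn_eq_of_mem p (Finset.subset_univ T) h

abbrev ptr (P : I → LinearOrder I) (S : Finset I) : I → I := fun j => favIn (P j) S j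

def pcyc (P : I → LinearOrder I) (S : Finset I) : Finset I :=
  cyclicAgents (fun a T => favIn (P a) T a) S

lemma mem_pcyc {P : I → LinearOrder I} {S : Finset I} {i : I} :
    i ∈ pcyc P S ↔ i ∈ S ∧ ∃ k ∈ Finset.range S.card, (ptr P S)^[k + 1] i = i := by
  simp only [pcyc, cyclicAgents, Finset.mem_filter, ptr]

lemma ptr_mem {P : I → LinearOrder I} {S : Finset I} {i : I} (h : i ∈ S) : ptr P S i ∈ S :=
  favIn_mem _ ⟨i, h⟩ _

lemma ptr_iter_mem {P : I → LinearOrder I} {S : Finset I} {i : I} (h : i ∈ S) (k : ℕ) :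
    (ptr P S)^[k] i ∈ S := by
  induction k with
  | zero => exact h
  | succ k ih => rw [Function.iterate_succ_apply']; exact ptr_mem ih

lemma mem_pcyc_of_period {P : I → LinearOrder I} {S : Finset I} {i : I} (hi : i ∈ S)
    {m : ℕ} (hm : 0 < m) (h : (ptr P S)^[m] i = i) : i ∈ pcyc P S := by
  classical
  have hex : ∃ n, 0 < n ∧ (ptr P S)^[n] i = i := ⟨m, hm, h⟩
  set m₀ := Nat.find hex with hm₀def
  obtain ⟨hm₀pos, hm₀⟩ := Nat.find_spec hex
  -- injectivity of a ↦ f^[a] i on range m₀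
  have hinj : Set.InjOn (fun a => (ptr P S)^[a] i) ↑(Finset.range m₀) := by
    intro a ha b hb hab
    simp only [Finset.coe_range, Set.mem_Iio] at ha hb
    dsimp only at hab
    by_contra hne
    rcases Nat.lt_or_ge a b with hlt | hge
    · have : (ptr P S)^[m₀ - b + a] i = i := by
        rw [Function.iterate_add_apply, hab, ← Function.iterate_add_apply]
        rw [show m₀ - b + b = m₀ from Nat.sub_add_cancel (le_of_lt hb)]
        exact hm₀
      have hpos : 0 < m₀ - b + a := by omega
      have hlt' : m₀ - b + a < m₀ := by omega
      exact Nat.find_min hex hlt' ⟨hpos, this⟩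
    · have hlt : b < a := lt_of_le_of_ne hge (Ne.symm hne)
      have : (ptr P S)^[m₀ - a + b] i = i := by
        rw [Function.iterate_add_apply, ← hab, ← Function.iterate_add_apply]
        rw [show m₀ - a + a = m₀ from Nat.sub_add_cancel (le_of_lt ha)]
        exact hm₀
      have hpos : 0 < m₀ - a + b := by omega
      have hlt' : m₀ - a + b < m₀ := by omega
      exact Nat.find_min hex hlt' ⟨hpos, this⟩
  have hcard : m₀ ≤ S.card := by
    have := Finset.card_le_card_of_injOn (fun a => (ptr P S)^[a] i)
      (fun a _ => ptr_iter_mem hi a) hinj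
    simpa using this
  rw [mem_pcyc]
  refine ⟨hi, m₀ - 1, Finset.mem_range.mpr (by omega), ?_⟩
  rw [show m₀ - 1 + 1 = m₀ from by omega]
  exact hm₀

lemma period_of_mem_pcyc {P : I → LinearOrder I} {S : Finset I} {i : I} (h : i ∈ pcyc P S) :
    ∃ m, 0 < m ∧ (ptr P S)^[m] i = i := by
  rw [mem_pcyc] at h
  obtain ⟨-, k, -, hk⟩ := h
  exact ⟨k + 1, Nat.succ_pos k, hk⟩

lemma pcyc_nonempty {P : I → LinearOrder I} {S : Finset I} (h : S.Nonempty) :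
    (pcyc P S).Nonempty := by
  classical
  obtain ⟨i₀, hi₀⟩ := h
  have hmaps : ∀ a ∈ Finset.range (S.card + 1), (ptr P S)^[a] i₀ ∈ S :=
    fun a _ => ptr_iter_mem hi₀ a
  have hcard : S.card < (Finset.range (S.card + 1)).card := by simp
  obtain ⟨a, ha, b, hb, hne, heq⟩ :=
    Finset.exists_ne_map_eq_of_card_lt_of_maps_to hcard hmaps
  rcases Nat.lt_or_ge a b with hlt | hge
  · refine ⟨(ptr P S)^[a] i₀, mem_pcyc_of_period (ptr_iter_mem hi₀ a) (m := b - a) (by omega) ?_⟩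
    rw [← Function.iterate_add_apply, show b - a + a = b from by omega]
    exact heq.symm
  · have hlt : b < a := lt_of_le_of_ne hge (fun hh => hne hh.symm)
    refine ⟨(ptr P S)^[b] i₀, mem_pcyc_of_period (ptr_iter_mem hi₀ b) (m := a - b) (by omega) ?_⟩
    rw [← Function.iterate_add_apply, show a - b + b = a from by omega]
    exact heq

lemma ptr_maps_pcyc {P : I → LinearOrder I} {S : Finset I} {j : I} (h : j ∈ pcyc P S) :
    ptr P S j ∈ pcyc P S := by
  obtain ⟨m, hm, hper⟩ := period_of_mem_pcyc h
  have hjS : j ∈ S := cyclicAgents_subset _ _ h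
  refine mem_pcyc_of_period (ptr_mem hjS) hm ?_
  rw [← Function.iterate_succ_apply, Function.iterate_succ_apply', hper]

lemma ptr_inj_pcyc {P : I → LinearOrder I} {S : Finset I} {a b : I}
    (ha : a ∈ pcyc P S) (hb : b ∈ pcyc P S) (h : ptr P S a = ptr P S b) : a = b := by
  obtain ⟨pa, hpa, hfa⟩ := period_of_mem_pcyc ha
  obtain ⟨pb, hpb, hfb⟩ := period_of_mem_pcyc hb
  set f := ptr P S
  have hNa : f^[pa * pb] a = a := by
    rw [Function.iterate_mul]; exact Function.iterate_fixed hfa pb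
  have hNb : f^[pa * pb] b = b := by
    rw [Nat.mul_comm, Function.iterate_mul]; exact Function.iterate_fixed hfb pa
  have hN : 0 < pa * pb := Nat.mul_pos hpa hpb
  calc a = f^[pa * pb] a := hNa.symm
    _ = f^[pa * pb - 1] (f a) := by
        conv_lhs => rw [show pa * pb = pa * pb - 1 + 1 from by omega]
        rw [Function.iterate_succ_apply]
    _ = f^[pa * pb - 1] (f b) := by rw [h]
    _ = f^[pa * pb] b := by
        conv_rhs => rw [show pa * pb = pa * pb - 1 + 1 from by omega]
        rw [Function.iterate_succ_apply]
    _ = b := hNb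

section Stages
variable [Fintype I]

def stage (P : I → LinearOrder I) : ℕ → Finset I
  | 0 => Finset.univ
  | (t + 1) => stage P t \ pcyc P (stage P t)

lemma stage_zero (P : I → LinearOrder I) : stage P 0 = Finset.univ := rfl

lemma stage_succ (P : I → LinearOrder I) (t : ℕ) :
    stage P (t + 1) = stage P t \ pcyc P (stage P t) := rfl

lemma stage_succ_subset (P : I → LinearOrder I) (t : ℕ) : stage P (t + 1) ⊆ stage P t :=
  Finset.sdiff_subset

lemma stage_anti (P : I → LinearOrder I) {t u : ℕ} (h : t ≤ u) : stage P u ⊆ stage P t := by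
  induction u with
  | zero => rw [Nat.le_zero.mp h]
  | succ u ih =>
    rcases Nat.lt_or_ge t (u + 1) with hlt | hge
    · exact (stage_succ_subset P u).trans (ih (by omega))
    · rw [Nat.le_antisymm h hge]

lemma exists_tier (P : I → LinearOrder I) (i : I) : ∃ t, i ∈ pcyc P (stage P t) := by
  classical
  suffices h : ∀ n t, (stage P t).card ≤ n → i ∈ stage P t → ∃ u, i ∈ pcyc P (stage P u) by
    exact h (stage P 0).card 0 le_rfl (Finset.mem_univ i)
  intro n
  induction n with
  | zero =>
    intro t hc hi
    exact absurd (Finset.card_pos.mpr ⟨i, hi⟩) (by omega)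
  | succ n ih =>
    intro t hc hi
    by_cases hcy : i ∈ pcyc P (stage P t)
    · exact ⟨t, hcy⟩
    · have hlt : (stage P (t + 1)).card < (stage P t).card := by
        rw [stage_succ]
        exact Finset.card_lt_card
          (Finset.sdiff_ssubset (cyclicAgents_subset _ _) (pcyc_nonempty ⟨i, hi⟩))
      exact ih (t + 1) (by omega) (by rw [stage_succ, Finset.mem_sdiff]; exact ⟨hi, hcy⟩)

noncomputable def tier (P : I → LinearOrder I) (i : I) : ℕ := Nat.find (exists_tier P i)

lemma tier_spec (P : I → LinearOrder I) (i : I) : i ∈ pcyc P (stage P (tier P i)) :=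
  Nat.find_spec (exists_tier P i)

lemma tier_min (P : I → LinearOrder I) {i : I} {t : ℕ} (h : t < tier P i) :
    i ∉ pcyc P (stage P t) := Nat.find_min (exists_tier P i) h

lemma mem_stage_of_le_tier (P : I → LinearOrder I) {i : I} {t : ℕ} (h : t ≤ tier P i) :
    i ∈ stage P t := by
  induction t with
  | zero => exact Finset.mem_univ i
  | succ t ih =>
    rw [stage_succ, Finset.mem_sdiff]
    exact ⟨ih (by omega), tier_min P (by omega)⟩

lemma le_tier_of_mem_stage (P : I → LinearOrder I) {i : I} {t : ℕ} (h : i ∈ stage P t) :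
    t ≤ tier P i := by
  by_contra hc
  push_neg at hc
  have h1 : i ∉ stage P (tier P i + 1) := by
    rw [stage_succ, Finset.mem_sdiff]
    push_neg
    intro; exact tier_spec P i
  exact h1 (stage_anti P (by omega) h)

lemma tier_eq_of_mem_pcyc (P : I → LinearOrder I) {i : I} {t : ℕ}
    (h : i ∈ pcyc P (stage P t)) : tier P i = t :=
  Nat.le_antisymm (Nat.find_min' _ h)
    (le_tier_of_mem_stage P (cyclicAgents_subset _ _ h))

lemma TTC_eq (P : I → LinearOrder I) (i : I) :
    TTC P i = ptr P (stage P (tier P i)) i := by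
  suffices h : ∀ n t, tier P i - t = n → t ≤ tier P i →
      TTCaux (fun a T => favIn (P a) T a) (stage P t) i = ptr P (stage P (tier P i)) i by
    exact h (tier P i) 0 (by omega) (Nat.zero_le _)
  intro n
  induction n with
  | zero =>
    intro t hn ht
    have heq : t = tier P i := by omega
    rw [heq]
    have hcy : i ∈ cyclicAgents (fun a T => favIn (P a) T a) (stage P (tier P i)) :=
      tier_spec P i
    have hne : (cyclicAgents (fun a T => favIn (P a) T a) (stage P (tier P i))).Nonempty :=
      ⟨i, hcy⟩
    rw [TTCaux, dif_pos hne, if_pos hcy]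
  | succ n ih =>
    intro t hn ht
    have hlt : t < tier P i := by omega
    have hi : i ∈ stage P t := mem_stage_of_le_tier P ht
    have hcy : i ∉ cyclicAgents (fun a T => favIn (P a) T a) (stage P t) := tier_min P hlt
    have hne : (cyclicAgents (fun a T => favIn (P a) T a) (stage P t)).Nonempty :=
      pcyc_nonempty ⟨i, hi⟩
    rw [TTCaux, dif_pos hne, if_neg hcy]
    have : stage P t \ cyclicAgents (fun a T => favIn (P a) T a) (stage P t) = stage P (t + 1) :=
      (stage_succ P t).symm
    rw [this]
    exact ih (t + 1) (by omega) (by omega)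

lemma TTC_eq' (P : I → LinearOrder I) (i : I) :
    TTC P i = favIn (P i) (stage P (tier P i)) i := TTC_eq P i

lemma TTC_mem_pcyc (P : I → LinearOrder I) (i : I) :
    TTC P i ∈ pcyc P (stage P (tier P i)) := by
  rw [TTC_eq]; exact ptr_maps_pcyc (tier_spec P i)

lemma tier_TTC (P : I → LinearOrder I) (i : I) : tier P (TTC P i) = tier P i :=
  tier_eq_of_mem_pcyc P (TTC_mem_pcyc P i)

end Stages

section Sync
variable [Fintype I]

lemma pcyc_congr {P Q : I → LinearOrder I} {S : Finset I} (h : ptr Q S = ptr P S) :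
    pcyc Q S = pcyc P S := by
  unfold pcyc cyclicAgents
  apply Finset.filter_congr
  intro x _
  constructor <;> (rintro ⟨k, hk, hit⟩; exact ⟨k, hk, by
    first
      | (rw [show (fun j => favIn (Q j) S j) = (fun j => favIn (P j) S j) from h] at hit; exact hit)
      | (rw [show (fun j => favIn (P j) S j) = (fun j => favIn (Q j) S j) from h.symm] at hit; exact hit)⟩)

lemma pcyc_subset_of_agree {P Q : I → LinearOrder I} {S : Finset I} {j : I}
    (hPQ : ∀ a, a ≠ j → P a = Q a) (hP : j ∉ pcyc P S) : pcyc P S ⊆ pcyc Q S := by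
  intro a ha
  obtain ⟨m, hm, hper⟩ := period_of_mem_pcyc ha
  have haS : a ∈ S := cyclicAgents_subset _ _ ha
  have havoid : ∀ k, (ptr P S)^[k] a ≠ j := by
    intro k hk
    apply hP
    have hjS : j ∈ S := hk ▸ ptr_iter_mem haS k
    refine mem_pcyc_of_period hjS hm ?_
    rw [← hk, ← Function.iterate_add_apply, Nat.add_comm, Function.iterate_add_apply, hper]
  have hiter : ∀ k, (ptr Q S)^[k] a = (ptr P S)^[k] a := by
    intro k
    induction k with
    | zero => rfl
    | succ k ih =>
      rw [Function.iterate_succ_apply', Function.iterate_succ_apply', ih]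
      show favIn (Q _) S _ = favIn (P _) S _
      rw [hPQ _ (havoid k)]
  exact mem_pcyc_of_period haS hm (by rw [hiter]; exact hper)

lemma pcyc_eq_of_agree {P Q : I → LinearOrder I} {S : Finset I} {j : I}
    (hPQ : ∀ a, a ≠ j → P a = Q a) (hP : j ∉ pcyc P S) (hQ : j ∉ pcyc Q S) :
    pcyc Q S = pcyc P S :=
  Finset.Subset.antisymm
    (pcyc_subset_of_agree (fun a ha => (hPQ a ha).symm) hQ)
    (pcyc_subset_of_agree hPQ hP)

lemma stage_sync {P Q : I → LinearOrder I} {j : I}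
    (hPQ : ∀ a, a ≠ j → P a = Q a) {t : ℕ} (htP : t ≤ tier P j) (htQ : t ≤ tier Q j) :
    stage Q t = stage P t := by
  induction t with
  | zero => rfl
  | succ t ih =>
    have ih' := ih (by omega) (by omega)
    have hP : j ∉ pcyc P (stage P t) := tier_min P (by omega)
    have hQ : j ∉ pcyc Q (stage P t) := by rw [← ih']; exact tier_min Q (by omega)
    rw [stage_succ, stage_succ, ih', pcyc_eq_of_agree hPQ hP hQ]

/-- Strategy-proofness of TTC (core inequality). -/
lemma TTC_sp_le (P : I → LinearOrder I) (i : I) (q : LinearOrder I) :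
    (P i).le (TTC (Function.update P i q) i) (TTC P i) := by
  classical
  set Q := Function.update P i q with hQdef
  have hPQ : ∀ a, a ≠ i → P a = Q a := fun a ha => (Function.update_of_ne ha q P).symm
  rcases le_or_gt (tier P i) (tier Q i) with hcase | hcase
  · -- i removed weakly later under Q : his object is still in stage P (tier P i)
    have hsync : stage Q (tier P i) = stage P (tier P i) := stage_sync hPQ le_rfl hcase
    have hmem : TTC Q i ∈ stage P (tier P i) := by
      rw [← hsync]
      exact stage_anti Q hcase (TTC_eq Q i ▸ ptr_mem (mem_stage_of_le_tier Q le_rfl))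
    rw [TTC_eq P i]
    exact le_favIn (P i) hmem i
  · -- i removed strictly earlier under Q : chain-persistence argument
    set tQ := tier Q i with htQdef
    set tP := tier P i with htPdef
    have hsync : stage Q tQ = stage P tQ := stage_sync hPQ (le_of_lt hcase) le_rfl
    set S' := stage P tQ with hS'def
    set g := ptr Q S' with hgdef
    have hiS' : i ∈ S' := mem_stage_of_le_tier P (le_of_lt hcase)
    have hicyc : i ∈ pcyc Q S' := by rw [← hsync]; exact tier_spec Q i
    have hex : ∃ n, 0 < n ∧ g^[n] i = i := period_of_mem_pcyc hicyc
    set m := Nat.find hex with hmdef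
    obtain ⟨hmpos, hmper⟩ := Nat.find_spec hex
    have hmin : ∀ c, 0 < c → c < m → g^[c] i ≠ i := by
      intro c hc1 hc2 hc3
      exact Nat.find_min hex hc2 ⟨hc1, hc3⟩
    -- the chain z a = g^[a] i survives under P until round tP
    have chain : ∀ u, tQ ≤ u → u ≤ tP → ∀ a, 1 ≤ a → a ≤ m →
        g^[a] i ∈ stage P u ∧ (a < m → ptr P (stage P u) (g^[a] i) = g^[a + 1] i) := by
      intro u
      induction u with
      | zero =>
        intro hu1 hu2 a ha1 ha2
        have htQ0 : tQ = 0 := by omega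
        constructor
        · rw [stage_zero]; exact Finset.mem_univ _
        · intro ha3
          have hne : g^[a] i ≠ i := hmin a (by omega) ha3
          have : ptr P (stage P 0) (g^[a] i) = ptr Q S' (g^[a] i) := by
            show favIn (P _) _ _ = favIn (Q _) _ _
            rw [hPQ _ hne, hS'def, htQ0]
          rw [this]
          exact (Function.iterate_succ_apply' g a i).symm
      | succ u ihu =>
        intro hu1 hu2 a ha1 ha2
        rcases le_or_gt (u + 1) tQ with h1 | h1
        · -- u + 1 ≤ tQ : same as base, directly
          have heq : u + 1 = tQ := by omega
          constructor
          · rw [heq]; exact ptr_iter_mem hiS' a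
          · intro ha3
            have hne : g^[a] i ≠ i := hmin a (by omega) ha3
            have : ptr P (stage P (u + 1)) (g^[a] i) = ptr Q S' (g^[a] i) := by
              show favIn (P _) _ _ = favIn (Q _) _ _
              rw [hPQ _ hne, hS'def, heq]
            rw [this]
            exact (Function.iterate_succ_apply' g a i).symm
        · -- tQ ≤ u
          have hu' : tQ ≤ u := by omega
          have hstep := ihu hu' (by omega)
          -- no chain member is P-cyclic at stage u
          have hnotcyc : ∀ b, 1 ≤ b → b ≤ m → g^[b] i ∉ pcyc P (stage P u) := by
            intro b hb1 hb2 hbc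
            have hreach : ∀ c, b + c ≤ m →
                (ptr P (stage P u))^[c] (g^[b] i) = g^[b + c] i := by
              intro c
              induction c with
              | zero => intro _; rfl
              | succ c ihc =>
                intro hbc'
                rw [Function.iterate_succ_apply', ihc (by omega),
                  (hstep (b + c) (by omega) (by omega)).2 (by omega)]
                rfl
            have hi_per : i ∉ pcyc P (stage P u) := tier_min P (by omega)
            apply hi_per
            obtain ⟨p, hp, hpper⟩ := period_of_mem_pcyc hbc
            have hieq : (ptr P (stage P u))^[m - b] (g^[b] i) = i := by
              rw [hreach (m - b) (by omega), show b + (m - b) = m from by omega, hmper]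
            have hiu : i ∈ stage P u := mem_stage_of_le_tier P (by omega)
            refine mem_pcyc_of_period hiu hp ?_
            rw [← hieq, ← Function.iterate_add_apply, Nat.add_comm,
              Function.iterate_add_apply, hpper]
        -- memberships at u+1
          have hmem1 : g^[a] i ∈ stage P (u + 1) := by
            rw [stage_succ, Finset.mem_sdiff]
            exact ⟨(hstep a ha1 ha2).1, hnotcyc a ha1 ha2⟩
          refine ⟨hmem1, ?_⟩
          intro ha3
          have hmem2 : g^[a + 1] i ∈ stage P (u + 1) := by
            rw [stage_succ, Finset.mem_sdiff]
            exact ⟨(hstep (a + 1) (by omega) (by omega)).1, hnotcyc (a + 1) (by omega) (by omega)⟩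
          have hprev : favIn (P (g^[a] i)) (stage P u) (g^[a] i) = g^[a + 1] i :=
            (hstep a ha1 ha2).2 ha3
          show favIn (P (g^[a] i)) (stage P (u + 1)) (g^[a] i) = g^[a + 1] i
          rw [← hprev]
          exact favIn_eq_of_mem (P (g^[a] i)) (stage_succ_subset P u) (by rw [hprev]; exact hmem2)
    -- conclude
    have hTTCQ : TTC Q i = g^[1] i := by
      rw [TTC_eq Q i, ← htQdef, Function.iterate_one]
      show favIn (Q i) _ _ = favIn (Q i) _ _
      rw [hsync]
    have hfin : g^[1] i ∈ stage P tP := (chain tP (le_of_lt hcase) le_rfl 1 le_rfl hmpos).1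
    rw [hTTCQ, TTC_eq P i]
    exact le_favIn (P i) hfin i

/-- Local unanimity of TTC. -/
lemma TTC_lu (P : I → LinearOrder I) (J : Finset I) (μ : I → I)
    (hbij : Set.BijOn μ ↑J ↑J) (htop : ∀ j ∈ J, μ j = topOf (P j) j) :
    ∀ i ∈ J, TTC P i = μ i := by
  classical
  intro i hi
  set f₀ := ptr P Finset.univ with hf₀
  have hpt : ∀ j ∈ J, f₀ j = μ j := by
    intro j hj
    rw [htop j hj]
    rfl
  have hcl : ∀ j ∈ J, ∀ k, f₀^[k] j ∈ J := by
    intro j hj k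
    induction k with
    | zero => exact hj
    | succ k ih =>
      rw [Function.iterate_succ_apply', hpt _ ih]
      exact hbij.mapsTo ih
  have hcancel : ∀ k (x y : I), x ∈ J → y ∈ J → f₀^[k] x = f₀^[k] y → x = y := by
    intro k
    induction k with
    | zero => intro x y _ _ h; exact h
    | succ k ih =>
      intro x y hx hy h
      rw [Function.iterate_succ_apply', Function.iterate_succ_apply',
        hpt _ (hcl x hx k), hpt _ (hcl y hy k)] at h
      exact ih x y hx hy (hbij.injOn (hcl x hx k) (hcl y hy k) h)
  have hpig : ∃ a b, a < b ∧ f₀^[a] i = f₀^[b] i := by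
    have hmaps : ∀ a ∈ Finset.range (J.card + 1), f₀^[a] i ∈ J := fun a _ => hcl i hi a
    have hcard : J.card < (Finset.range (J.card + 1)).card := by simp
    obtain ⟨a, _, b, _, hne, heq⟩ :=
      Finset.exists_ne_map_eq_of_card_lt_of_maps_to hcard hmaps
    rcases Nat.lt_or_ge a b with hlt | hge
    · exact ⟨a, b, hlt, heq⟩
    · exact ⟨b, a, lt_of_le_of_ne hge (fun hh => hne hh.symm), heq.symm⟩
  obtain ⟨a, b, hab, heq⟩ := hpig
  have hper : f₀^[b - a] i = i := by
    have : f₀^[a] (f₀^[b - a] i) = f₀^[a] i := by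
      rw [← Function.iterate_add_apply, show a + (b - a) = b from by omega]
      exact heq.symm
    exact hcancel a _ i (hcl i hi (b - a)) hi this
  have hcyc : i ∈ pcyc P (stage P 0) :=
    mem_pcyc_of_period (Finset.mem_univ i) (m := b - a) (by omega) hper
  have htier : tier P i = 0 := tier_eq_of_mem_pcyc P hcyc
  rw [TTC_eq P i, htier]
  exact hpt i hi

end Sync

section Orbit
variable [Fintype I]

lemma iterate_mod {f : I → I} {x : I} {m : ℕ} (hm : 0 < m) (h : f^[m] x = x) (a : ℕ) :
    f^[a] x = f^[a % m] x := by
  conv_lhs => rw [show a = a % m + m * (a / m) from (Nat.mod_add_div a m).symm]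
  rw [Function.iterate_add_apply, Function.iterate_mul, Function.iterate_fixed h]

open scoped Classical in
noncomputable def orbit (P : I → LinearOrder I) (i : I) : Finset I :=
  Finset.univ.filter (fun x => ∃ a : ℕ, (ptr P (stage P (tier P i)))^[a] i = x)

lemma mem_orbit {P : I → LinearOrder I} {i x : I} :
    x ∈ orbit P i ↔ ∃ a : ℕ, (ptr P (stage P (tier P i)))^[a] i = x := by
  classical
  simp [orbit]

lemma orbit_self (P : I → LinearOrder I) (i : I) : i ∈ orbit P i :=
  mem_orbit.mpr ⟨0, rfl⟩

lemma orbit_subset_pcyc {P : I → LinearOrder I} {i x : I} (h : x ∈ orbit P i) :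
    x ∈ pcyc P (stage P (tier P i)) := by
  obtain ⟨a, ha⟩ := mem_orbit.mp h
  obtain ⟨m, hm, hper⟩ := period_of_mem_pcyc (tier_spec P i)
  have hiS : i ∈ stage P (tier P i) := cyclicAgents_subset _ _ (tier_spec P i)
  refine mem_pcyc_of_period (ha ▸ ptr_iter_mem hiS a) hm ?_
  rw [← ha, ← Function.iterate_add_apply, Nat.add_comm, Function.iterate_add_apply, hper]

lemma tier_orbit {P : I → LinearOrder I} {i x : I} (h : x ∈ orbit P i) :
    tier P x = tier P i :=
  tier_eq_of_mem_pcyc P (orbit_subset_pcyc h)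

lemma orbit_iter {P : I → LinearOrder I} {i x : I} (h : x ∈ orbit P i) (c : ℕ) :
    (ptr P (stage P (tier P i)))^[c] x ∈ orbit P i := by
  obtain ⟨a, ha⟩ := mem_orbit.mp h
  exact mem_orbit.mpr ⟨c + a, by rw [Function.iterate_add_apply, ha]⟩

lemma orbit_eq_of_mem {P : I → LinearOrder I} {i x : I} (h : x ∈ orbit P i) :
    orbit P x = orbit P i := by
  set f := ptr P (stage P (tier P i)) with hf
  have htx : tier P x = tier P i := tier_orbit h
  obtain ⟨a, ha⟩ := mem_orbit.mp h
  obtain ⟨m, hm, hper⟩ := period_of_mem_pcyc (tier_spec P i)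
  -- i is in the forward orbit of x
  have hix : f^[m - a % m] x = i := by
    have h1 : f^[a % m] i = x := by rw [← iterate_mod hm hper a, ha]
    rw [← h1, ← Function.iterate_add_apply,
      show m - a % m + a % m = m from Nat.sub_add_cancel (le_of_lt (Nat.mod_lt a hm)), hper]
  apply Finset.Subset.antisymm
  · intro y hy
    obtain ⟨b, hb⟩ := mem_orbit.mp hy
    rw [htx] at hb
    exact mem_orbit.mpr ⟨b + a, by rw [Function.iterate_add_apply, ha, hb]⟩
  · intro y hy
    obtain ⟨b, hb⟩ := mem_orbit.mp hy
    rw [mem_orbit, htx]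
    exact ⟨b + (m - a % m), by rw [Function.iterate_add_apply, hix, hb]⟩

lemma orbit_prev {P : I → LinearOrder I} {i x : I} (h : x ∈ orbit P i) :
    ∃ y ∈ orbit P i, ptr P (stage P (tier P i)) y = x := by
  obtain ⟨a, ha⟩ := mem_orbit.mp h
  obtain ⟨m, hm, hper⟩ := period_of_mem_pcyc (tier_spec P i)
  refine ⟨(ptr P (stage P (tier P i)))^[a + (m - 1)] i, mem_orbit.mpr ⟨a + (m - 1), rfl⟩, ?_⟩
  have hs := Function.iterate_succ_apply' (ptr P (stage P (tier P i))) (a + (m - 1)) i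
  rw [← hs, show (a + (m - 1)).succ = a + m from by omega,
    Function.iterate_add_apply _ a m, hper, ha]

lemma orbit_bij (P : I → LinearOrder I) (i : I) :
    Set.BijOn (ptr P (stage P (tier P i))) ↑(orbit P i) ↑(orbit P i) := by
  refine ⟨?_, ?_, ?_⟩
  · intro x hx
    simp only [Finset.mem_coe] at hx ⊢
    obtain ⟨a, ha⟩ := mem_orbit.mp hx
    exact mem_orbit.mpr ⟨a + 1, by rw [Function.iterate_succ_apply', ha]⟩
  · intro x hx y hy hxy
    simp only [Finset.mem_coe] at hx hy
    exact ptr_inj_pcyc (orbit_subset_pcyc hx) (orbit_subset_pcyc hy) hxy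
  · intro x hx
    simp only [Finset.mem_coe] at hx
    obtain ⟨y, hy, hyx⟩ := orbit_prev hx
    exact ⟨y, hy, hyx⟩

def alignedAg [Fintype I] (P : I → LinearOrder I) (j : I) : Prop :=
  topOf (P j) j = ptr P (stage P (tier P j)) j ∧
  ∀ y, y ≠ ptr P (stage P (tier P j)) j → (P j).le y j

open scoped Classical in
noncomputable def misCount (P : I → LinearOrder I) (i : I) : ℕ :=
  ((orbit P i).filter (fun j => ¬ alignedAg P j)).card

end Orbit

section Main
variable [Fintype I]

theorem key_induction (D : Set (LinearOrder I)) (hD : TopTwoRich D) (hnt : Nontrivial I)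
    (ψ : (I → LinearOrder I) → I → I)
    (hψ : ∀ P : I → LinearOrder I, (∀ a, P a ∈ D) → Function.Bijective (ψ P))
    (hLU : LocallyUnanimous D ψ) (hSP : StrategyProof D ψ) (s : ℕ) :
    ∀ P : I → LinearOrder I, (∀ a, P a ∈ D) → ∀ i : I, tier P i = s → ψ P i = TTC P i := by
  haveI := hnt
  induction s using Nat.strong_induction_on with
  | _ s IH =>
  classical
  have memStage : ∀ P : I → LinearOrder I, (∀ a, P a ∈ D) → ∀ j, j ∈ stage P s →
      ψ P j ∈ stage P s := by
    intro P hP j hj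
    set E := Finset.univ.filter (fun a => tier P a < s) with hE
    have hEmem : ∀ a : I, a ∈ E ↔ tier P a < s := by intro a; simp [hE]
    have hmapsto : ∀ a ∈ E, ψ P a ∈ E := by
      intro a ha
      rw [hEmem] at ha ⊢
      rw [IH (tier P a) ha P hP a rfl, tier_TTC]
      exact ha
    have himg : E.image (ψ P) = E := by
      apply Finset.eq_of_subset_of_card_le
      · intro x hx
        obtain ⟨a, ha, rfl⟩ := Finset.mem_image.mp hx
        exact hmapsto a ha
      · rw [Finset.card_image_of_injective E (hψ P hP).1]
    by_contra hmem
    have h1 : ψ P j ∈ E := by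
      rw [hEmem]
      rcases Nat.lt_or_ge (tier P (ψ P j)) s with h | h
      · exact h
      · exact absurd (mem_stage_of_le_tier P h) hmem
    rw [← himg] at h1
    obtain ⟨a, ha, haeq⟩ := Finset.mem_image.mp h1
    have haj : a = j := (hψ P hP).1 haeq
    subst haj
    rw [hEmem] at ha
    exact absurd (le_tier_of_mem_stage P hj) (by omega)
  rcases Nat.eq_zero_or_pos s with rfl | hspos
  · -- base case: round-one agents get their tops by local unanimity
    intro P hP i htier
    have hbij := orbit_bij P i
    have htop : ∀ j ∈ orbit P i, ptr P (stage P (tier P i)) j = topOf (P j) j := by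
      intro j hj
      have h0 : stage P (tier P i) = Finset.univ := by rw [htier]; rfl
      rw [h0]
      rfl
    have hψi := hLU P hP (orbit P i) ⟨i, orbit_self P i⟩ (ptr P (stage P (tier P i)))
      hbij (fun j hj => htop j hj) i (orbit_self P i)
    rw [hψi, TTC_eq]
  · -- inductive step: inner induction on the number of misaligned members
    have inner : ∀ ν : ℕ, ∀ P : I → LinearOrder I, (∀ a, P a ∈ D) → ∀ i : I,
        tier P i = s → misCount P i ≤ ν → ∀ j ∈ orbit P i, ψ P j = TTC P j := by
      intro ν
      induction ν with
      | zero =>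
        intro P hP i htier hmis j hj
        exfalso
        have hall : ∀ x ∈ orbit P i, alignedAg P x := by
          intro x hx
          by_contra hx'
          have hmem : x ∈ (orbit P i).filter (fun j => ¬ alignedAg P j) :=
            Finset.mem_filter.mpr ⟨hx, hx'⟩
          have hcard : 0 < misCount P i := Finset.card_pos.mpr ⟨x, hmem⟩
          omega
        set f := ptr P (stage P (tier P i)) with hf
        have htop0 : ∀ x ∈ orbit P i, ptr P (stage P 0) x = f x := by
          intro x hx
          have h1 := (hall x hx).1
          show topOf (P x) x = f x
          rw [h1, tier_orbit hx, ← hf]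
        have hiter : ∀ a : ℕ, (ptr P (stage P 0))^[a] i = f^[a] i := by
          intro a
          induction a with
          | zero => rfl
          | succ a iha =>
            rw [Function.iterate_succ_apply', Function.iterate_succ_apply', iha,
              htop0 _ (mem_orbit.mpr ⟨a, rfl⟩)]
        obtain ⟨m, hm, hper⟩ := period_of_mem_pcyc (tier_spec P i)
        have hc0 : i ∈ pcyc P (stage P 0) :=
          mem_pcyc_of_period (Finset.mem_univ i) hm (by rw [hiter]; exact hper)
        have := tier_eq_of_mem_pcyc P hc0
        omega
      | succ ν ihv =>
        intro P hP i htier hmis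
        by_cases hle : misCount P i ≤ ν
        · exact ihv P hP i htier hle
        have hexact : misCount P i = ν + 1 := by omega
        set f := ptr P (stage P (tier P i)) with hf
        -- pinning the misaligned members
        have pin_mis : ∀ j' ∈ orbit P i, ¬ alignedAg P j' → ψ P j' = f j' := by
          intro j' hj' hmisj
          have htj : tier P j' = tier P i := tier_orbit hj'
          have htjs : tier P j' = s := by rw [htj, htier]
          have hfmem : f j' ∈ stage P (tier P i) :=
            cyclicAgents_subset _ _ (ptr_maps_pcyc (orbit_subset_pcyc hj'))
          obtain ⟨q, hqD, hqtop, hqsec⟩ :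
              ∃ q ∈ D, topOf q j' = f j' ∧ ∀ y, y ≠ f j' → q.le y j' := by
            by_cases hfj : f j' = j'
            · obtain ⟨w, hw⟩ := exists_ne j'
              obtain ⟨p, hpD, hp1, hp2⟩ := hD j' w (Ne.symm hw)
              refine ⟨p, hpD, hp1.trans hfj.symm, ?_⟩
              intro y hy
              have hle2 := le_topOf p y j'
              rwa [hp1] at hle2
            · obtain ⟨p, hpD, hp1, hp2⟩ := hD (f j') j' hfj
              exact ⟨p, hpD, (topOf_indep p j' j' (f j')).trans hp1, hp2⟩
          set Q := Function.update P j' q with hQdef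
          have hQD : ∀ a, Q a ∈ D := by
            intro a
            by_cases h : a = j'
            · rw [hQdef, h, Function.update_self]; exact hqD
            · rw [hQdef, Function.update_of_ne h]; exact hP a
          have hPQ : ∀ a, a ≠ j' → P a = Q a := by
            intro a ha
            rw [hQdef, Function.update_of_ne ha]
          have hQj : Q j' = q := by rw [hQdef, Function.update_self]
          have hψQ : ψ Q j' = f j' := by
            rcases Nat.lt_or_ge (tier Q j') s with hcase | hcase
            · -- j' leaves early under Q
              have hsync : stage Q (tier Q j') = stage P (tier Q j') :=
                stage_sync hPQ (by omega) le_rfl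
              have h1 : ψ Q j' = TTC Q j' := IH (tier Q j') hcase Q hQD j' rfl
              have hmem : topOf q j' ∈ stage P (tier Q j') := by
                rw [hqtop]
                exact stage_anti P (by omega : tier Q j' ≤ tier P i) hfmem
              rw [h1, TTC_eq', hQj, hsync, favIn_eq_topOf q hmem, hqtop]
            · -- j' still trades in round s under Q
              have hsync : stage Q s = stage P s := stage_sync hPQ (le_of_eq htjs.symm) hcase
              have hend : stage P s = stage P (tier P i) := by rw [htier]
              have hgf : ptr Q (stage P (tier P i)) = f := by
                funext x
                by_cases hx : x = j'
                · subst hx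
                  show favIn (Q x) (stage P (tier P i)) x = f x
                  rw [hQj, favIn_eq_topOf q (by rw [hqtop]; exact hfmem), hqtop]
                · show favIn (Q x) (stage P (tier P i)) x = favIn (P x) (stage P (tier P i)) x
                  rw [← hPQ x hx]
              have hcycQ : j' ∈ pcyc Q (stage Q s) := by
                rw [hsync, hend, pcyc_congr hgf]
                exact orbit_subset_pcyc hj'
              have htQ : tier Q j' = s := tier_eq_of_mem_pcyc Q hcycQ
              have horb : orbit Q j' = orbit P i := by
                have h1 : orbit Q j' = orbit P j' := by
                  unfold orbit
                  rw [htQ, htjs, hsync, hend, hgf, hf]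
                rw [h1, orbit_eq_of_mem hj']
              have htQx : ∀ x ∈ orbit P i, tier Q x = s := by
                intro x hx
                apply tier_eq_of_mem_pcyc
                rw [hsync, hend, pcyc_congr hgf]
                exact orbit_subset_pcyc hx
              have hptrQx : ∀ x ∈ orbit P i, ptr Q (stage Q (tier Q x)) x = f x := by
                intro x hx
                rw [htQx x hx, hsync, hend, hgf]
              have hptrPx : ∀ x ∈ orbit P i, ptr P (stage P (tier P x)) x = f x := by
                intro x hx
                rw [tier_orbit hx, ← hf]
              have halQj : alignedAg Q j' := by
                constructor
                · rw [hptrQx j' hj', hQj]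
                  exact hqtop
                · intro y hy
                  rw [hptrQx j' hj'] at hy
                  rw [hQj]
                  exact hqsec y hy
              have hcount : misCount Q j' ≤ ν := by
                have hsub : (orbit Q j').filter (fun x => ¬ alignedAg Q x) ⊆
                    ((orbit P i).filter (fun x => ¬ alignedAg P x)).erase j' := by
                  intro x hx
                  rw [horb] at hx
                  obtain ⟨hxo, hxa⟩ := Finset.mem_filter.mp hx
                  have hxne : x ≠ j' := by
                    intro hxe
                    subst hxe
                    exact hxa halQj
                  refine Finset.mem_erase.mpr ⟨hxne, Finset.mem_filter.mpr ⟨hxo, ?_⟩⟩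
                  intro halP
                  obtain ⟨hal1, hal2⟩ := halP
                  rw [hptrPx x hxo] at hal1
                  apply hxa
                  constructor
                  · rw [hptrQx x hxo, ← hPQ x hxne]
                    exact hal1
                  · intro y hy
                    rw [hptrQx x hxo] at hy
                    rw [← hPQ x hxne]
                    have h2 := hal2 y
                    rw [hptrPx x hxo] at h2
                    exact h2 hy
                have hcard := Finset.card_le_card hsub
                have herase : (((orbit P i).filter (fun x => ¬ alignedAg P x)).erase j').card
                    = ν := by
                  rw [Finset.card_erase_of_mem (Finset.mem_filter.mpr ⟨hj', hmisj⟩)]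
                  have : ((orbit P i).filter (fun x => ¬ alignedAg P x)).card = ν + 1 := hexact
                  omega
                calc misCount Q j' = ((orbit Q j').filter (fun x => ¬ alignedAg Q x)).card := rfl
                  _ ≤ _ := hcard
                  _ = ν := herase
              have hres := ihv Q hQD j' htQ hcount j' (orbit_self Q j')
              rw [hres, TTC_eq]
              rw [hptrQx j' hj']
          have hsp := hSP P hP j' q hqD
          rw [← hQdef, hψQ] at hsp
          have hge : (P j').le (f j') (ψ P j') := lo_le_of_not_lt _ hsp
          have hmem2 : ψ P j' ∈ stage P (tier P i) := by
            rw [htier]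
            exact memStage P hP j' (mem_stage_of_le_tier P (le_of_eq htjs.symm))
          have hle2 : (P j').le (ψ P j') (f j') := le_favIn (P j') hmem2 j'
          exact lo_antisymm _ hle2 hge
        -- dichotomy for the aligned members
        have pin_al : ∀ j' ∈ orbit P i, alignedAg P j' → ψ P j' = f j' ∨ ψ P j' = j' := by
          intro j' hj' hal
          by_cases he : ψ P j' = f j'
          · exact Or.inl he
          right
          have htj : tier P j' = tier P i := tier_orbit hj'
          have hup : (P j').le (ψ P j') j' := by
            apply hal.2
            rw [htj, ← hf]
            exact he
          have hdown : (P j').le j' (ψ P j') := by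
            obtain ⟨w, hw⟩ := exists_ne j'
            obtain ⟨p, hpD, hp1, _⟩ := hD j' w (Ne.symm hw)
            have hPp : ∀ a, (Function.update P j' p) a ∈ D := by
              intro a
              by_cases h : a = j'
              · rw [h, Function.update_self]; exact hpD
              · rw [Function.update_of_ne h]; exact hP a
            have hid : Set.BijOn (id : I → I) ↑({j'} : Finset I) ↑({j'} : Finset I) :=
              ⟨fun x hx => hx, fun x _ y _ h => h, fun x hx => ⟨x, hx, rfl⟩⟩
            have hLUj : ψ (Function.update P j' p) j' = j' := by
              have htops : ∀ x ∈ ({j'} : Finset I),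
                  (id : I → I) x = topOf ((Function.update P j' p) x) x := by
                intro x hx
                rw [Finset.mem_singleton] at hx
                subst hx
                rw [Function.update_self]
                exact hp1.symm
              exact hLU (Function.update P j' p) hPp {j'} ⟨j', Finset.mem_singleton_self j'⟩
                id hid htops j' (Finset.mem_singleton_self j')
            have hsp := hSP P hP j' p hpD
            rw [hLUj] at hsp
            exact lo_le_of_not_lt _ hsp
          exact lo_antisymm _ hup hdown
        -- cascade around the cycle
        have hfil : ((orbit P i).filter (fun x => ¬ alignedAg P x)).Nonempty := by
          rw [← Finset.card_pos]
          have h1 : ((orbit P i).filter (fun x => ¬ alignedAg P x)).card = ν + 1 := hexact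
          omega
        obtain ⟨j₀, hj₀⟩ := hfil
        have hj₀o : j₀ ∈ orbit P i := (Finset.mem_filter.mp hj₀).1
        have hj₀m : ¬ alignedAg P j₀ := (Finset.mem_filter.mp hj₀).2
        have hstart : ψ P j₀ = f j₀ := pin_mis j₀ hj₀o hj₀m
        have F : ∀ c : ℕ, ψ P (f^[c] j₀) = f (f^[c] j₀) := by
          intro c
          induction c with
          | zero => exact hstart
          | succ c ihc =>
            have hzo : f^[c + 1] j₀ ∈ orbit P i := by rw [hf]; exact orbit_iter hj₀o (c + 1)
            have hzy : f^[c + 1] j₀ = f (f^[c] j₀) := Function.iterate_succ_apply' f c j₀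
            by_cases hal : alignedAg P (f^[c + 1] j₀)
            · rcases pin_al _ hzo hal with h | h
              · exact h
              · have h1 : ψ P (f^[c + 1] j₀) = ψ P (f^[c] j₀) := by
                  rw [h, hzy, ← ihc]
                have h2 : f^[c + 1] j₀ = f^[c] j₀ := (hψ P hP).1 h1
                rw [h, h2, ← hzy, h2]
            · exact pin_mis _ hzo hal
        intro j hjI
        have horbj : orbit P j₀ = orbit P i := orbit_eq_of_mem hj₀o
        have hjJ : j ∈ orbit P j₀ := by rw [horbj]; exact hjI
        obtain ⟨a, ha⟩ := mem_orbit.mp hjJ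
        have htj0 : tier P j₀ = tier P i := tier_orbit hj₀o
        rw [htj0, ← hf] at ha
        rw [TTC_eq, tier_orbit hjI, ← hf, ← ha]
        exact F a
    intro P hP i htier
    exact inner (misCount P i) P hP i htier le_rfl i (orbit_self P i)

end Main


/-- On any preference domain satisfying Top-two Richness, a
mechanism is locally unanimous and strategy-proof if and only if it equals the
TTC mechanism. -/
theorem stmt_4 {I : Type*} [DecidableEq I] [Fintype I] (hn : 3 ≤ Fintype.card I)
    (D : Set (LinearOrder I)) (hD : TopTwoRich D)
    (ψ : (I → LinearOrder I) → I → I)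
    (hψ : ∀ P : I → LinearOrder I, (∀ i, P i ∈ D) → Function.Bijective (ψ P)) :
    (LocallyUnanimous D ψ ∧ StrategyProof D ψ) ↔
      ∀ P : I → LinearOrder I, (∀ i, P i ∈ D) → ψ P = TTC P := by
  constructor
  · rintro ⟨hLU, hSP⟩ P hP
    funext i
    have hnt : Nontrivial I := Fintype.one_lt_card_iff_nontrivial.mp (by omega)
    exact key_induction D hD hnt ψ hψ hLU hSP (tier P i) P hP i rfl
  · intro h
    constructor
    · intro P hP J hJne μ hbij htop i hi
      rw [h P hP]
      exact TTC_lu P J μ hbij htop i hi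
    · intro P hP i q hq
      have hup : ∀ a, Function.update P i q a ∈ D := by
        intro a
        by_cases ha : a = i
        · rw [ha, Function.update_self]; exact hq
        · rw [Function.update_of_ne ha]; exact hP a
      rw [h P hP, h _ hup]
      exact lo_not_lt_of_le _ (TTC_sp_le P i q)
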